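/- arXiv:1405.0926 — 4 statements merged into one kernel-verified Lean document; each statement's English description precedes it below -/
import Mathlib

section
/- Let 𝓛_k = d/dt + 2k·h(t) (acting on differential polynomials in h) and let 𝓛 be the derivation on polynomials in y_1, y_2, … (where y_j represents h^{(j-1)}) defined by 𝓛 = ∂/∂y_1 − Σ_s (s+1)s y_s ∂/∂y_{s+1}. Then the commutator [𝓛, 𝓛_k] acting on polynomials equals 2k + ℰ, where ℰ = −2 Σ_s s y_s ∂/∂y_s is the (negative) Euler grading operator. -/
open MvPolynomial

/-- The shift derivation Σ_s y_{s+1} ∂/∂y_s (variable `X i` represents y_{i+1}). -/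
noncomputable def shiftD (P : MvPolynomial ℕ ℝ) : MvPolynomial ℕ ℝ :=
  ∑ s ∈ P.vars, X (s + 1) * pderiv s P

/-- The operator 𝓛_k = Σ_s y_{s+1} ∂/∂y_s + 2k y_1 (multiplication). -/
noncomputable def Lop (k : ℝ) (P : MvPolynomial ℕ ℝ) : MvPolynomial ℕ ℝ :=
  shiftD P + C (2 * k) * X 0 * P

/-- The derivation 𝓛 with 𝓛 y_1 = 1 and 𝓛 y_{s+1} = −(s+1)s y_s for s ≥ 1. -/
noncomputable def Lder (P : MvPolynomial ℕ ℝ) : MvPolynomial ℕ ℝ :=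
  pderiv 0 P - ∑ s ∈ P.vars,
    if 1 ≤ s then (C (((s + 1) * s : ℕ) : ℝ) * X (s - 1) * pderiv s P) else 0

/-- The Euler-type operator ℰ = −2 Σ_s s y_s ∂/∂y_s. -/
noncomputable def Eop (P : MvPolynomial ℕ ℝ) : MvPolynomial ℕ ℝ :=
  - ∑ s ∈ P.vars, C ((2 * (s + 1) : ℕ) : ℝ) * X s * pderiv s P

/-- Z_2 = y_2 + y_1², Z_{k+1} = 𝓛_k Z_k; the differential polynomials 𝒟_k = Z_{k+1}. -/
noncomputable def Z : ℕ → MvPolynomial ℕ ℝ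
  | 0 => 0
  | 1 => 0
  | 2 => X 1 + X 0 ^ 2
  | (n + 3) => Lop ((n + 2 : ℕ) : ℝ) (Z (n + 2))

/- ### Auxiliary machinery -/

/-- Generic "sum over vars" operator. -/
noncomputable def sumD (f : ℕ → MvPolynomial ℕ ℝ) (P : MvPolynomial ℕ ℝ) : MvPolynomial ℕ ℝ :=
  ∑ s ∈ P.vars, f s * pderiv s P

lemma sumD_subset (f : ℕ → MvPolynomial ℕ ℝ) {P : MvPolynomial ℕ ℝ} {t : Finset ℕ}
    (h : P.vars ⊆ t) : sumD f P = ∑ s ∈ t, f s * pderiv s P :=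
  Finset.sum_subset h fun x _ hx => by
    rw [pderiv_eq_zero_of_notMem_vars hx, mul_zero]

lemma sumD_eq_mkDerivation (f : ℕ → MvPolynomial ℕ ℝ) (P : MvPolynomial ℕ ℝ) :
    sumD f P = mkDerivation ℝ f P := by
  induction P using MvPolynomial.induction_on with
  | C a => simp [sumD, vars_C, derivation_C]
  | add p q hp hq =>
    rw [sumD_subset f (vars_add_subset p q), map_add]
    simp only [map_add, mul_add, Finset.sum_add_distrib]
    rw [← sumD_subset f Finset.subset_union_left, ← sumD_subset f Finset.subset_union_right,
      hp, hq]
  | mul_X p n hp =>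
    have hsub : (p * X n).vars ⊆ p.vars ∪ {n} := by
      refine (vars_mul p (X n)).trans ?_
      rw [vars_X]
    rw [sumD_subset f hsub]
    simp only [pderiv_mul, mul_add, Finset.sum_add_distrib]
    have h1 : ∑ s ∈ p.vars ∪ {n}, f s * (pderiv s p * X n)
        = mkDerivation ℝ f p * X n := by
      rw [← hp, sumD_subset f (Finset.subset_union_left (s₂ := {n})), Finset.sum_mul]
      exact Finset.sum_congr rfl fun s _ => by ring
    have h2 : ∑ s ∈ p.vars ∪ {n}, f s * (p * pderiv s (X n)) = f n * p := by
      rw [Finset.sum_eq_single n]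
      · simp
      · intro b _ hb; simp [pderiv_X_of_ne (Ne.symm hb)]
      · intro hn; exact absurd (Finset.mem_union_right _ (Finset.mem_singleton_self n)) hn
    rw [h1, h2, Derivation.leibniz, mkDerivation_X, smul_eq_mul, smul_eq_mul]
    ring

/-- The derivation version of `shiftD`. -/
noncomputable def D₁ : Derivation ℝ (MvPolynomial ℕ ℝ) (MvPolynomial ℕ ℝ) :=
  mkDerivation ℝ fun s => X (s + 1)

/-- Coefficient function for the second part of `Lder`. -/
noncomputable def gfun : ℕ → MvPolynomial ℕ ℝ := fun s =>
  if 1 ≤ s then C (((s + 1) * s : ℕ) : ℝ) * X (s - 1) else 0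

/-- The derivation version of `Lder`. -/
noncomputable def D₂ : Derivation ℝ (MvPolynomial ℕ ℝ) (MvPolynomial ℕ ℝ) :=
  pderiv 0 - mkDerivation ℝ gfun

/-- Coefficient function for `Eop`. -/
noncomputable def efun : ℕ → MvPolynomial ℕ ℝ := fun s => C ((2 * (s + 1) : ℕ) : ℝ) * X s

lemma shiftD_eq (P : MvPolynomial ℕ ℝ) : shiftD P = D₁ P :=
  sumD_eq_mkDerivation _ P

lemma Lder_eq (P : MvPolynomial ℕ ℝ) : Lder P = D₂ P := by
  have : (∑ s ∈ P.vars,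
      if 1 ≤ s then (C (((s + 1) * s : ℕ) : ℝ) * X (s - 1) * pderiv s P) else 0)
      = sumD gfun P := by
    refine Finset.sum_congr rfl fun s _ => ?_
    by_cases h : 1 ≤ s <;> simp [gfun, h]
  rw [Lder, this, sumD_eq_mkDerivation, D₂, Derivation.sub_apply]

lemma Eop_eq (P : MvPolynomial ℕ ℝ) : Eop P = -(mkDerivation ℝ efun P) := by
  have : (∑ s ∈ P.vars, C ((2 * (s + 1) : ℕ) : ℝ) * X s * pderiv s P) = sumD efun P := by
    refine Finset.sum_congr rfl fun s _ => ?_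
    rw [efun, mul_assoc]
  rw [Eop, this, sumD_eq_mkDerivation]

lemma D₂_X_zero : D₂ (X 0) = 1 := by
  simp [D₂, gfun]

lemma D₁_X (i : ℕ) : D₁ (X i) = X (i + 1) := mkDerivation_X ℝ _ i

lemma D₂_X_succ (s : ℕ) : D₂ (X (s + 1)) = -(C (((s + 2) * (s + 1) : ℕ) : ℝ) * X s) := by
  have h0 : (s + 1 : ℕ) ≠ 0 := by omega
  rw [D₂, Derivation.sub_apply, pderiv_X_of_ne h0, mkDerivation_X, zero_sub]
  have : gfun (s + 1) = C (((s + 2) * (s + 1) : ℕ) : ℝ) * X s := by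
    simp only [gfun, if_pos (Nat.le_add_left 1 s), Nat.add_sub_cancel]
  rw [this]

/-- The key commutator computation: [D₂, D₁] = -mkDerivation efun. -/
lemma commutator_derivations (P : MvPolynomial ℕ ℝ) :
    D₂ (D₁ P) - D₁ (D₂ P) = -(mkDerivation ℝ efun P) := by
  have h : ⁅D₂, D₁⁆ = -(mkDerivation ℝ efun) := by
    apply derivation_ext
    intro i
    rw [Derivation.commutator_apply, Derivation.neg_apply, mkDerivation_X]
    cases i with
    | zero =>
      rw [D₁_X, show (0 + 1 : ℕ) = 0 + 1 from rfl, D₂_X_succ, D₂_X_zero,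
        Derivation.map_one_eq_zero, sub_zero]
      norm_num [efun]
    | succ s =>
      rw [D₁_X, show (s + 1 + 1 : ℕ) = (s + 1) + 1 from rfl, D₂_X_succ (s + 1), D₂_X_succ s,
        map_neg]
      have hD : D₁ (C (((s + 2) * (s + 1) : ℕ) : ℝ) * X s)
          = C (((s + 2) * (s + 1) : ℕ) : ℝ) * X (s + 1) := by
        rw [C_mul', Derivation.map_smul, D₁_X, ← C_mul']
      rw [hD, efun]
      push_cast
      simp only [map_add, map_mul, map_pow, map_ofNat, map_one]
      ring
  have := congrArg (fun D => D P) h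
  simpa [Derivation.commutator_apply] using this

/-- The commutator identity [𝓛, 𝓛_k] = 2k + ℰ on polynomials. -/
theorem commutator_L_Lk (k : ℝ) (P : MvPolynomial ℕ ℝ) :
    Lder (Lop k P) - Lop k (Lder P) = C (2 * k) * P + Eop P := by
  rw [Lop, Lop, shiftD_eq, shiftD_eq, Lder_eq, Lder_eq, Eop_eq, map_add]
  have h1 : D₂ (C (2 * k) * X 0 * P) = C (2 * k) * (X 0 * D₂ P + P) := by
    rw [mul_assoc, C_mul', Derivation.map_smul, Derivation.leibniz, D₂_X_zero,
      smul_eq_mul, smul_eq_mul, ← C_mul']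
    ring
  rw [h1]
  linear_combination commutator_derivations P
end

section
/- Let 𝒟 be a homogeneous polynomial of degree −2(n+2) in y_1,…,y_{n+2} (grading deg y_j = −2j). Then 𝓛𝒟 = 0 if and only if 𝒟 = c·𝒟_{n+1} − P(𝒟_1,…,𝒟_{n-1}) for some constant c and homogeneous polynomial P of appropriate degree; equivalently, 𝓛𝒟 = 0 iff 𝒟 lies in the subalgebra generated by Z_2, Z_3, …, Z_{n+2} (i.e., when written as a polynomial in the algebraically independent elements y_1, Z_2, …, Z_{n+2}, the variable y_1 does not appear). -/
/-!
`𝓛` is a derivation, and its commutator with the shift `Σ y_{s+1} ∂/∂y_s` is the Euler operator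
`ℰ`, which multiplies a polynomial of weight `k` by `-2k`; the term `2k y₁` of `𝓛_k` cancels
exactly this, so `𝓛 Z_k = 0` by induction on `k`. Since `Z_j = y_j + (polynomial in y₁, …,
y_{j-1})`, the substitution `y₁ ↦ y₁, y_j ↦ Z_j` is a weight-preserving automorphism, and as
`𝓛 y₁ = 1`, `𝓛 Z_j = 0` it turns `∂/∂y₁` into `𝓛`. Hence the kernel of `𝓛` in weight `n + 2` is
the image of the weight `n + 2` polynomials in `y₂, y₃, …`. Such a polynomial is `c y_{n+2}` plus
a polynomial in `y₂, …, y_n`, because `y_{n+1}` could only be completed by `y₁`.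
-/

open MvPolynomial

namespace MvPolynomial

section CommSemiring

variable {R σ τ : Type*} [CommSemiring R]

theorem mkDerivation_eq_sum_pderiv (f : σ → MvPolynomial σ R) {p : MvPolynomial σ R}
    {T : Finset σ} (hT : p.vars ⊆ T) :
    mkDerivation R f p = ∑ s ∈ T, f s * pderiv s p := by
  classical
  let D : Derivation R (MvPolynomial σ R) (MvPolynomial σ R) := ∑ s ∈ T, f s • pderiv s
  have hD : ∀ q, D q = ∑ s ∈ T, f s * pderiv s q := fun q => by
    rw [← Derivation.coeFnAddMonoidHom_apply, map_sum, Finset.sum_apply]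
    simp only [Derivation.coeFnAddMonoidHom_apply, Derivation.smul_apply, smul_eq_mul]
  have hX : ∀ i ∈ (T : Set σ), mkDerivation R f (X i) = D (X i) := fun i hi => by
    simp [hD, pderiv_X, Pi.single_apply, Finset.mem_coe.mp hi]
  rw [derivation_eqOn_supported hX (mem_supported.mpr (by exact_mod_cast hT)), hD]

theorem vars_monomial_subset (d : σ →₀ ℕ) (r : R) : (monomial d r).vars ⊆ d.support := by
  classical
  by_cases hr : r = 0
  · simp [hr]
  · rw [vars_monomial hr]

theorem mkDerivation_mem_supported {f : σ → MvPolynomial σ R} {s t : Set σ} (hst : s ⊆ t)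
    (hf : ∀ i ∈ s, f i ∈ supported R t) {p : MvPolynomial σ R} (hp : p ∈ supported R s) :
    mkDerivation R f p ∈ supported R t := by
  induction hp using Algebra.adjoin_induction with
  | mem x hx => obtain ⟨i, hi, rfl⟩ := hx; simpa using hf i hi
  | algebraMap r => simp
  | add x y _ _ hx hy => rw [map_add]; exact add_mem hx hy
  | mul x y hx' hy' hx hy =>
    rw [Derivation.leibniz]
    exact add_mem (mul_mem (supported_mono hst hx') hy) (mul_mem (supported_mono hst hy') hx)

noncomputable def eulerDerivation (w : σ → ℕ) :
    Derivation R (MvPolynomial σ R) (MvPolynomial σ R) :=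
  mkDerivation R fun i => w i • X i

theorem eulerDerivation_of_isWeightedHomogeneous {w : σ → ℕ} {p : MvPolynomial σ R} {k : ℕ}
    (hp : p.IsWeightedHomogeneous w k) : eulerDerivation w p = k • p := by
  induction hp using IsWeightedHomogeneous.induction_on with
  | zero => simp
  | add p q _ _ hp hq => rw [map_add, hp, hq, smul_add]
  | monomial d r hd =>
    rw [eulerDerivation, mkDerivation_eq_sum_pderiv _ (vars_monomial_subset d r), ← hd,
      Finsupp.weight_apply, Finsupp.sum, Finset.sum_smul]
    refine Finset.sum_congr rfl fun i _ => ?_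
    rw [smul_mul_assoc, X_mul_pderiv_monomial, smul_smul, smul_eq_mul, mul_comm]

theorem IsWeightedHomogeneous.mkDerivation {w : σ → ℕ} {e k : ℕ} {f : σ → MvPolynomial σ R}
    (hf : ∀ i, (f i).IsWeightedHomogeneous w (w i + e)) {p : MvPolynomial σ R}
    (hp : p.IsWeightedHomogeneous w k) : (mkDerivation R f p).IsWeightedHomogeneous w (k + e) := by
  induction hp using IsWeightedHomogeneous.induction_on with
  | zero => simpa using isWeightedHomogeneous_zero R w (k + e)
  | add p q _ _ hp hq => rw [map_add]; exact hp.add hq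
  | monomial d r hd =>
    rw [mkDerivation_eq_sum_pderiv _ (vars_monomial_subset d r)]
    refine IsWeightedHomogeneous.sum _ _ _ fun i hi => ?_
    have hwi : w i ≤ k := hd ▸ Finsupp.le_weight_of_ne_zero' w (Finsupp.mem_support_iff.mp hi)
    have h := (hf i).mul
      ((isWeightedHomogeneous_monomial w d r hd).pderiv (Nat.sub_add_cancel hwi))
    rwa [show w i + e + (k - w i) = k + e by omega] at h

theorem _root_.Derivation.apply_aeval_eq_aeval_pderiv {A : Type*} [CommSemiring A] [Algebra R A]
    (D : Derivation R A A) {g : σ → A} {i : σ}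
    (hg : ∀ j, D (g j) = aeval g (pderiv i (X j : MvPolynomial σ R))) (p : MvPolynomial σ R) :
    D (aeval g p) = aeval g (pderiv i p) := by
  induction p using MvPolynomial.induction_on with
  | C a => rw [aeval_C, D.map_algebraMap, pderiv_C, map_zero]
  | add p q hp hq => rw [map_add, map_add, hp, hq, map_add, map_add]
  | mul_X p j hp =>
    rw [map_mul, aeval_X, D.leibniz, hp, hg, pderiv_mul, map_add, map_mul, map_mul, aeval_X,
      smul_eq_mul, smul_eq_mul]
    ring

theorem _root_.Derivation.apply_aeval_eq_zero {A : Type*} [CommSemiring A] [Algebra R A]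
    (D : Derivation R A A) {g : σ → A} (hg : ∀ j, D (g j) = 0) (p : MvPolynomial σ R) :
    D (aeval g p) = 0 := by
  have hp : aeval g p ∈ Algebra.adjoin R (Set.range g) := by
    rw [Algebra.adjoin_range_eq_range_aeval]; exact ⟨p, rfl⟩
  exact D.eqOn_adjoin (D2 := 0) (by rintro _ ⟨j, rfl⟩; exact hg j) hp

variable {w : σ → ℕ} {w' : τ → ℕ}

theorem IsWeightedHomogeneous.aeval {g : σ → MvPolynomial τ R}
    (hg : ∀ i, (g i).IsWeightedHomogeneous w' (w i)) {p : MvPolynomial σ R} {k : ℕ}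
    (hp : p.IsWeightedHomogeneous w k) : (aeval g p).IsWeightedHomogeneous w' k := by
  induction hp using IsWeightedHomogeneous.induction_on with
  | zero => simpa using isWeightedHomogeneous_zero R w' k
  | add p q _ _ hp hq => rw [map_add]; exact hp.add hq
  | monomial d r hd =>
    rw [aeval_monomial, ← hd, Finsupp.weight_apply, Finsupp.prod, Finsupp.sum,
      ← zero_add (∑ _ ∈ _, _)]
    exact (isWeightedHomogeneous_C w' r).mul
      (IsWeightedHomogeneous.prod _ _ _ fun i _ => (hg i).pow (d i))

theorem weightedHomogeneousComponent_aeval {g : σ → MvPolynomial τ R}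
    (hg : ∀ i, (g i).IsWeightedHomogeneous w' (w i)) (k : ℕ) (p : MvPolynomial σ R) :
    weightedHomogeneousComponent w' k (aeval g p) =
      aeval g (weightedHomogeneousComponent w k p) := by
  classical
  induction p using MvPolynomial.induction_on' with
  | add p q hp hq => rw [map_add, map_add, hp, hq, map_add, map_add]
  | monomial d r =>
    have hd := isWeightedHomogeneous_monomial w d r rfl
    rw [weightedHomogeneousComponent_of_mem hd, weightedHomogeneousComponent_of_mem (hd.aeval hg)]
    split_ifs <;> simp

theorem IsWeightedHomogeneous.of_rename {f : τ → σ} (hf : Function.Injective f)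
    {p : MvPolynomial τ R} {k : ℕ} (hp : (rename f p).IsWeightedHomogeneous w k) :
    p.IsWeightedHomogeneous (w ∘ f) k := by
  intro d hd
  rw [← coeff_rename_mapDomain f hf] at hd
  rw [← hp hd, Finsupp.weight_apply, Finsupp.weight_apply, Finsupp.sum_mapDomain_index]
  · rfl
  · simp
  · intro _ _ _; rw [add_smul]

theorem aeval_eq_of_eqOn_of_mem_supported {S : Type*} [CommSemiring S] [Algebra R S]
    {f g : σ → S} {s : Set σ} (hfg : Set.EqOn f g s) {p : MvPolynomial σ R}
    (hp : p ∈ supported R s) : aeval f p = aeval g p :=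
  eval₂Hom_congr' rfl (fun _ hi _ => hfg (mem_supported.mp hp hi)) rfl

end CommSemiring

section CommRing

variable {R σ : Type*} [CommRing R]

theorem coeff_eq_zero_of_pderiv_eq_zero [IsDomain R] [CharZero R] {p : MvPolynomial σ R}
    {i : σ} (hp : pderiv i p = 0) {m : σ →₀ ℕ} (hm : m i ≠ 0) : coeff m p = 0 := by
  have h := coeff_pderiv (i := i) p (m - Finsupp.single i 1)
  rw [hp, coeff_zero, Finsupp.sub_add_single_one_cancel hm] at h
  exact (mul_eq_zero.mp h.symm).resolve_right (by norm_cast)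

def IsUnitriangular (g : ℕ → MvPolynomial ℕ R) : Prop :=
  ∀ k, g k - X k ∈ supported R {i | i < k}

noncomputable def unitriangularInv (g : ℕ → MvPolynomial ℕ R) : ℕ → MvPolynomial ℕ R
  | k => X k - aeval (fun j => if j < k then unitriangularInv g j else 0) (g k - X k)

namespace IsUnitriangular

variable {g : ℕ → MvPolynomial ℕ R}

theorem aeval_surjective (hg : IsUnitriangular g) : Function.Surjective (aeval (R := R) g) := by
  have hX : ∀ k, X k ∈ (aeval (R := R) g).range := by
    intro k
    induction k using Nat.strong_induction_on with
    | _ k ih =>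
      have hlow : supported R {i | i < k} ≤ (aeval g).range :=
        Algebra.adjoin_le (by rintro _ ⟨i, hi, rfl⟩; exact ih i hi)
      rw [show X k = aeval (R := R) g (X k) - (g k - X k) by rw [aeval_X]; ring]
      exact sub_mem ⟨X k, rfl⟩ (hlow (hg k))
  rw [← AlgHom.range_eq_top, eq_top_iff, ← adjoin_range_X]
  exact Algebra.adjoin_le (by rintro _ ⟨k, rfl⟩; exact hX k)

theorem aeval_unitriangularInv_comp (hg : IsUnitriangular g) :
    (aeval (unitriangularInv g)).comp (aeval g) = AlgHom.id R (MvPolynomial ℕ R) := by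
  refine algHom_ext fun k => ?_
  have hlow : aeval (unitriangularInv g) (g k - X k) =
      aeval (fun j => if j < k then unitriangularInv g j else 0) (g k - X k) :=
    aeval_eq_of_eqOn_of_mem_supported (fun j (hj : j < k) => (if_pos hj).symm) (hg k)
  rw [AlgHom.comp_apply, aeval_X, AlgHom.id_apply, ← sub_add_cancel (g k) (X k), map_add, hlow,
    aeval_X, unitriangularInv]
  exact add_sub_cancel _ _

theorem aeval_bijective (hg : IsUnitriangular g) : Function.Bijective (aeval (R := R) g) :=
  ⟨Function.LeftInverse.injective (g := aeval (unitriangularInv g))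
    (fun p => by simpa using AlgHom.congr_fun hg.aeval_unitriangularInv_comp p),
    hg.aeval_surjective⟩

end IsUnitriangular

end CommRing

end MvPolynomial

theorem Finsupp.eq_single_of_weight_eq_of_le {m : ℕ →₀ ℕ} {n s : ℕ} (h0 : m 0 = 0)
    (hw : weight (· + 1) m = n + 2) (hs : m s ≠ 0) (hns : n ≤ s) : m = single (n + 1) 1 := by
  set r := m - single s 1
  have hm : m = r + single s 1 := (Finsupp.sub_add_single_one_cancel hs).symm
  rw [hm, map_add, weight_single, one_smul] at hw
  have hr : r = 0 := by
    ext t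
    by_contra ht
    have := le_weight_of_ne_zero' (· + 1) ht
    obtain rfl : t = 0 := by omega
    simp [r, h0] at ht
  rw [hm, hr, zero_add, show s = n + 1 by simp [hr] at hw; omega]

noncomputable def shiftDerivation : Derivation ℝ (MvPolynomial ℕ ℝ) (MvPolynomial ℕ ℝ) :=
  mkDerivation ℝ fun s => X (s + 1)

-- The coefficient `(s + 1) * s` vanishes at `s = 0`, so the truncated `s - 1` does no harm.
noncomputable def lDerivation : Derivation ℝ (MvPolynomial ℕ ℝ) (MvPolynomial ℕ ℝ) :=
  pderiv 0 - mkDerivation ℝ fun s => C (((s + 1) * s : ℕ) : ℝ) * X (s - 1)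

theorem shiftD_eq_shiftDerivation (P : MvPolynomial ℕ ℝ) : shiftD P = shiftDerivation P :=
  (mkDerivation_eq_sum_pderiv _ subset_rfl).symm

theorem Lder_eq_lDerivation (P : MvPolynomial ℕ ℝ) : Lder P = lDerivation P := by
  rw [Lder, lDerivation, Derivation.coe_sub, Pi.sub_apply, mkDerivation_eq_sum_pderiv _ subset_rfl]
  congr 1
  refine Finset.sum_congr rfl fun s _ => ?_
  rcases s with _ | s <;> simp

theorem lDerivation_X_zero : lDerivation (X 0) = 1 := by
  simp [lDerivation]

theorem lDerivation_X_succ (s : ℕ) :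
    lDerivation (X (s + 1)) = -(((s + 2) * (s + 1) : ℝ) • X s) := by
  simp only [lDerivation, Derivation.coe_sub, Pi.sub_apply, mkDerivation_X,
    pderiv_X_of_ne (Nat.succ_ne_zero s), zero_sub, Nat.add_sub_cancel, ← smul_eq_C_mul]
  push_cast
  ring_nf

theorem commutator_lDerivation_shiftDerivation :
    ⁅lDerivation, shiftDerivation⁆ = (-2 : ℝ) • eulerDerivation (· + 1) := by
  refine derivation_ext fun i => ?_
  rcases i with _ | s
  all_goals simp only [Derivation.commutator_apply, shiftDerivation, eulerDerivation,
      mkDerivation_X, lDerivation_X_succ, lDerivation_X_zero, Derivation.map_one_eq_zero,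
      Derivation.smul_apply, map_neg, Derivation.map_smul]
  all_goals push_cast; module

theorem Lop_eq_shiftDerivation_add (k : ℝ) (P : MvPolynomial ℕ ℝ) :
    Lop k P = shiftDerivation P + C (2 * k) * X 0 * P := by
  rw [Lop, shiftD_eq_shiftDerivation]

theorem Z_isWeightedHomogeneous : ∀ k, (Z k).IsWeightedHomogeneous (· + 1) k
  | 0 | 1 => isWeightedHomogeneous_zero ℝ _ _
  | 2 => by
    rw [Z]
    exact (isWeightedHomogeneous_X ℝ _ 1).add ((isWeightedHomogeneous_X ℝ _ 0).pow 2)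
  | k + 3 => by
    have hZ := Z_isWeightedHomogeneous (k + 2)
    rw [Z, Lop_eq_shiftDerivation_add]
    refine (IsWeightedHomogeneous.mkDerivation (e := 1) (fun i => isWeightedHomogeneous_X ℝ _ _)
      hZ).add ?_
    have h := ((isWeightedHomogeneous_C (· + 1) (2 * ((k + 2 : ℕ) : ℝ))).mul
      (isWeightedHomogeneous_X ℝ (· + 1) 0)).mul hZ
    rwa [show 0 + (0 + 1) + (k + 2) = k + 3 by ring] at h

theorem lDerivation_shiftDerivation (P : MvPolynomial ℕ ℝ) :
    lDerivation (shiftDerivation P) =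
      shiftDerivation (lDerivation P) + (-2 : ℝ) • eulerDerivation (· + 1) P := by
  rw [← Derivation.smul_apply, ← commutator_lDerivation_shiftDerivation,
    Derivation.commutator_apply, add_sub_cancel]

theorem lDerivation_Z : ∀ k, lDerivation (Z k) = 0
  | 0 | 1 => map_zero _
  | 2 => by
    rw [Z, map_add, pow_two, Derivation.leibniz, lDerivation_X_succ, lDerivation_X_zero,
      smul_eq_mul, mul_one]
    push_cast
    module
  | k + 3 => by
    rw [Z, Lop_eq_shiftDerivation_add, map_add, mul_assoc, C_mul', Derivation.map_smul,
      lDerivation_shiftDerivation,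
      Derivation.leibniz, lDerivation_Z, lDerivation_X_zero,
      eulerDerivation_of_isWeightedHomogeneous (Z_isWeightedHomogeneous _), map_zero, smul_zero,
      smul_eq_mul, mul_one]
    push_cast
    module

theorem Z_sub_X_mem_supported : ∀ k, Z (k + 2) - X (k + 1) ∈ supported ℝ {i | i < k + 1}
  | 0 => by
    rw [Z, add_sub_cancel_left]
    exact pow_mem (X_mem_supported.mpr (by simp) : X 0 ∈ supported ℝ {i | i < 0 + 1}) 2
  | k + 1 => by
    have hlow := Z_sub_X_mem_supported k
    have hZ : Z (k + 2) ∈ supported ℝ {i | i < k + 2} := by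
      rw [← sub_add_cancel (Z (k + 2)) (X (k + 1))]
      exact add_mem (supported_mono (fun i (hi : i < k + 1) => show i < k + 2 by omega) hlow)
        (X_mem_supported.mpr (by simp))
    have hrec : Z (k + 3) - X (k + 2) = shiftDerivation (Z (k + 2) - X (k + 1)) +
        C (2 * ((k + 2 : ℕ) : ℝ)) * X 0 * Z (k + 2) := by
      rw [Z, Lop_eq_shiftDerivation_add, map_sub, shiftDerivation, mkDerivation_X]
      ring
    rw [hrec]
    refine add_mem (mkDerivation_mem_supported (fun i (hi : i < k + 1) => show i < k + 2 by omega)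
      (fun i (hi : i < k + 1) => X_mem_supported.mpr (show i + 1 < k + 2 by omega)) hlow)
      (mul_mem (mul_mem (Subalgebra.algebraMap_mem _ _) (X_mem_supported.mpr (by simp))) hZ)

/-- The substitution `y₁ ↦ y₁`, `y_j ↦ Z_j` for `j ≥ 2` (recall that `X i` stands for
`y_{i+1}`). -/
noncomputable def zBasis : ℕ → MvPolynomial ℕ ℝ
  | 0 => X 0
  | k + 1 => Z (k + 2)

theorem zBasis_isUnitriangular : IsUnitriangular zBasis
  | 0 => by simp [zBasis]
  | k + 1 => Z_sub_X_mem_supported k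

theorem zBasis_isWeightedHomogeneous : ∀ i, (zBasis i).IsWeightedHomogeneous (· + 1) (i + 1)
  | 0 => isWeightedHomogeneous_X ℝ _ 0
  | k + 1 => Z_isWeightedHomogeneous (k + 2)

theorem lDerivation_aeval_zBasis (P : MvPolynomial ℕ ℝ) :
    lDerivation (aeval zBasis P) = aeval zBasis (pderiv 0 P) := by
  refine lDerivation.apply_aeval_eq_aeval_pderiv (fun j => ?_) P
  rcases j with _ | j
  · simp [zBasis, lDerivation_X_zero]
  · simp [zBasis, lDerivation_Z]

theorem exists_eq_aeval_zBasis_of_lDerivation_eq_zero {D : MvPolynomial ℕ ℝ} {N : ℕ}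
    (hD : D.IsWeightedHomogeneous (· + 1) N) (hL : lDerivation D = 0) :
    ∃ Q : MvPolynomial ℕ ℝ,
      Q.IsWeightedHomogeneous (· + 1) N ∧ pderiv 0 Q = 0 ∧ aeval zBasis Q = D := by
  obtain ⟨P, hP⟩ := zBasis_isUnitriangular.aeval_surjective D
  have hQ : aeval zBasis (weightedHomogeneousComponent (· + 1) N P) = D := by
    rw [← weightedHomogeneousComponent_aeval zBasis_isWeightedHomogeneous, hP,
      hD.weightedHomogeneousComponent_same]
  refine ⟨_, weightedHomogeneousComponent_isWeightedHomogeneous N P,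
    zBasis_isUnitriangular.aeval_bijective.1 ?_, hQ⟩
  rw [← lDerivation_aeval_zBasis, hQ, hL, map_zero]

theorem exists_eq_C_mul_X_add_rename {Q : MvPolynomial ℕ ℝ} {n : ℕ}
    (hQ : Q.IsWeightedHomogeneous (· + 1) (n + 2)) (h0 : pderiv 0 Q = 0) :
    ∃ (c : ℝ) (q : MvPolynomial (Fin (n - 1)) ℝ),
      q.IsWeightedHomogeneous (fun i : Fin (n - 1) => (i : ℕ) + 2) (n + 2) ∧
      Q = C c * X (n + 1) + rename (fun i : Fin (n - 1) => (i : ℕ) + 1) q := by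
  set c := coeff (Finsupp.single (n + 1) 1) Q
  have hinj : Function.Injective fun i : Fin (n - 1) => (i : ℕ) + 1 :=
    fun i j h => Fin.ext (by simpa using h)
  have hvars :
      ↑(Q - C c * X (n + 1)).vars ⊆ Set.range fun i : Fin (n - 1) => (i : ℕ) + 1 := by
    intro s hs
    obtain ⟨m, hm, hms⟩ := (mem_vars_iff_mem_support s).mp hs
    rw [mem_support_iff, coeff_sub, coeff_C_mul, coeff_X] at hm
    have hne : m ≠ Finsupp.single (n + 1) 1 := by rintro rfl; simp [c] at hm
    have hmQ : coeff m Q ≠ 0 := by simpa [Ne.symm hne] using hm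
    have hm0 : m 0 = 0 := by
      by_contra h
      exact hmQ (coeff_eq_zero_of_pderiv_eq_zero h0 h)
    have hsn : s < n := by
      by_contra h
      exact hne (Finsupp.eq_single_of_weight_eq_of_le hm0 (hQ hmQ) (Finsupp.mem_support_iff.mp hms)
        (not_lt.mp h))
    have hs0 : s ≠ 0 := by
      rintro rfl
      exact Finsupp.mem_support_iff.mp hms hm0
    exact ⟨⟨s - 1, by omega⟩, by simp; omega⟩
  obtain ⟨q, hq⟩ := exists_rename_eq_of_vars_subset_range _ _ hinj hvars
  have hXhom : (C c * X (n + 1) : MvPolynomial ℕ ℝ).IsWeightedHomogeneous (· + 1) (n + 2) := by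
    simpa using
      (isWeightedHomogeneous_C (· + 1) c).mul (isWeightedHomogeneous_X ℝ (· + 1) (n + 1))
  refine ⟨c, q, IsWeightedHomogeneous.of_rename hinj (hq ▸ hQ.sub hXhom), ?_⟩
  rw [hq, add_sub_cancel]

/-- Here `𝒟_j = Z_{j+1}`, and the variable `i : Fin (n-1)` of `P` represents `x_{i+2}`,
substituted by `𝒟_{i+1} = Z_{i+2}`. -/
theorem Buchstaber_Rees_general (n : ℕ) (D : MvPolynomial ℕ ℝ)
    (hhom : D.IsWeightedHomogeneous (fun i => i + 1) (n + 2)) :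
    Lder D = 0 ↔
    ∃ (c : ℝ) (P : MvPolynomial (Fin (n - 1)) ℝ),
      MvPolynomial.IsWeightedHomogeneous (fun i : Fin (n - 1) => (i : ℕ) + 2) P (n + 2) ∧
      D = (C c : MvPolynomial ℕ ℝ) * Z (n + 2) - aeval (fun i : Fin (n - 1) => Z ((i : ℕ) + 2)) P := by
  rw [Lder_eq_lDerivation]
  constructor
  · intro hL
    obtain ⟨Q, hQ, hQ0, rfl⟩ := exists_eq_aeval_zBasis_of_lDerivation_eq_zero hhom hL
    obtain ⟨c, q, hq, rfl⟩ := exists_eq_C_mul_X_add_rename hQ hQ0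
    refine ⟨c, -q, hq.neg, ?_⟩
    rw [map_neg, sub_neg_eq_add, map_add, map_mul, aeval_C, aeval_X, aeval_rename, algebraMap_eq]
    rfl
  · rintro ⟨c, P, -, rfl⟩
    rw [map_sub, C_mul', lDerivation.map_smul, lDerivation_Z, smul_zero,
      lDerivation.apply_aeval_eq_zero (fun i => lDerivation_Z _), sub_zero]

/-- Buchstaber–Rees: a homogeneous differential polynomial 𝒟 of degree −2(n+2)
(weighted homogeneous of weight n+2 for w(y_j)=j) satisfies 𝓛𝒟 = 0 if and only
if 𝒟 = c·𝒟_{n+1} − P(𝒟_1,…,𝒟_{n−1}) for a constant c and a homogeneous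
polynomial P(x_2,…,x_n) of degree n+2 (grading deg x_j = j); here 𝒟_j = Z_{j+1},
and the variable `i : Fin (n-1)` of P represents x_{i+2}, substituted by
𝒟_{i+1} = Z_{i+2}. -/
theorem Buchstaber_Rees (n : ℕ) (hn : 1 ≤ n) (D : MvPolynomial ℕ ℝ)
    (hhom : D.IsWeightedHomogeneous (fun i => i + 1) (n + 2)) :
    Lder D = 0 ↔
    ∃ (c : ℝ) (P : MvPolynomial (Fin (n - 1)) ℝ),
      MvPolynomial.IsWeightedHomogeneous (fun i : Fin (n - 1) => (i : ℕ) + 2) P (n + 2) ∧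
      D = (C c : MvPolynomial ℕ ℝ) * Z (n + 2) - aeval (fun i : Fin (n - 1) => Z ((i : ℕ) + 2)) P :=
  Buchstaber_Rees_general n D hhom
end

section
/- The formal series ψ(z,t) = e^{−(1/2)h(t)z² + r(t)}(z^δ + Σ_{k≥2} Φ_k(t) z^{2k+δ}/(2k+δ)!) satisfies the heat equation ∂ψ/∂t = (1/2)∂²ψ/∂z² (as formal power series in z) if and only if r'(t) = −(δ + 1/2)h(t) and the coefficients satisfy the recursion Φ_k = 2Φ_{k−1}' + 4(k−1)h Φ_{k−1} − (2k+δ−2)(2k+δ−3)(h' + h²)Φ_{k−2}, with Φ_0 = 1, Φ_1 = 0. -/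
/-- The formal series ψ(z,t) = e^{−(1/2)h(t)z² + r(t)} Σ_{k≥0} Φ_k(t) z^{2k+δ}/(2k+δ)!
(with Φ_0 = 1, Φ_1 = 0, δ ∈ {0,1}) satisfies the heat equation ∂ψ/∂t = (1/2)∂²ψ/∂z²
as a formal power series in z — equivalently, after dividing by the exponential
prefactor, the coefficient of z^{2k+δ}/(2k+δ)! satisfies, for every k,
  Φ_k' + r'Φ_k − (1/2)h'(2k+δ)(2k+δ−1)Φ_{k−1}
    = (1/2)(Φ_{k+1} − 2h(2k+δ)Φ_k + h²(2k+δ)(2k+δ−1)Φ_{k−1} − hΦ_k)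
— if and only if r'(t) = −(δ+1/2)h(t) and the recursion
  Φ_k = 2Φ_{k−1}' + 4(k−1)hΦ_{k−1} − (2k+δ−2)(2k+δ−3)(h'+h²)Φ_{k−2}
holds for all k ≥ 2. -/
theorem ansatz_heat_iff_recursion (δ : ℕ) (hδ : δ = 0 ∨ δ = 1)
    (h r : ℝ → ℝ) (Φ : ℕ → ℝ → ℝ)
    (hh : ContDiff ℝ (⊤ : ℕ∞) h) (hr : ContDiff ℝ (⊤ : ℕ∞) r) (hΦ : ∀ k, ContDiff ℝ (⊤ : ℕ∞) (Φ k))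
    (hΦ0 : ∀ t, Φ 0 t = 1) (hΦ1 : ∀ t, Φ 1 t = 0) :
    (∀ (k : ℕ) (t : ℝ),
      deriv (Φ k) t + deriv r t * Φ k t
        - (1/2) * deriv h t * ((2*(k:ℝ)+δ) * (2*(k:ℝ)+δ-1))
            * (if k = 0 then 0 else Φ (k-1) t)
      = (1/2) * (Φ (k+1) t - 2 * h t * (2*(k:ℝ)+δ) * Φ k t
          + (h t)^2 * ((2*(k:ℝ)+δ) * (2*(k:ℝ)+δ-1)) * (if k = 0 then 0 else Φ (k-1) t)
          - h t * Φ k t))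
    ↔ ((∀ t, deriv r t = -((δ:ℝ) + 1/2) * h t) ∧
       (∀ (k : ℕ) (t : ℝ), 2 ≤ k →
         Φ k t = 2 * deriv (Φ (k-1)) t + 4 * ((k:ℝ)-1) * h t * Φ (k-1) t
           - ((2*(k:ℝ)+δ-2) * (2*(k:ℝ)+δ-3)) * (deriv h t + (h t)^2) * Φ (k-2) t)) := by
  have hΦ0' : ∀ t, deriv (Φ 0) t = 0 := by
    have : Φ 0 = fun _ => (1:ℝ) := funext hΦ0
    intro t; rw [this]; simp
  have hΦ1' : ∀ t, deriv (Φ 1) t = 0 := by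
    have : Φ 1 = fun _ => (0:ℝ) := funext hΦ1
    intro t; rw [this]; simp
  constructor
  · intro H
    have hr' : ∀ t, deriv r t = -((δ:ℝ) + 1/2) * h t := by
      intro t
      have h0 := H 0 t
      simp [hΦ0, hΦ0', hΦ1] at h0
      linear_combination h0
    refine ⟨hr', ?_⟩
    intro k t hk
    obtain ⟨m, rfl⟩ : ∃ m, k = m + 2 := ⟨k - 2, by omega⟩
    have hm := H (m+1) t
    rw [hr'] at hm
    simp only [Nat.add_sub_cancel, if_neg (Nat.succ_ne_zero m)] at hm
    have e1 : m + 2 - 1 = m + 1 := by omega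
    have e2 : m + 2 - 2 = m := by omega
    rw [e1, e2]; rw [show m+1+1 = m+2 from rfl] at hm
    push_cast at hm ⊢
    linear_combination (-2) * hm
  · rintro ⟨hr', hrec⟩ k t
    rw [hr']
    cases k with
    | zero => simp [hΦ0, hΦ0', hΦ1]; ring
    | succ n =>
      have hm := hrec (n+2) t (by omega)
      have e1 : n + 2 - 1 = n + 1 := by omega
      have e2 : n + 2 - 2 = n := by omega
      rw [e1, e2] at hm
      simp only [if_neg (Nat.succ_ne_zero n), Nat.add_sub_cancel]
      push_cast at hm ⊢
      rw [show n+1+1 = n+2 from rfl]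
      linear_combination (-1/2) * hm
end

section
/- The function h(t) = (1/2)(α_1/(α_1 t − β_1) + α_2/(α_2 t − β_2)) satisfies the ODE h'' + 6 h h' + 4 h³ = 0 on any interval where both denominators are nonzero. -/
/-!
Each summand `u(t) = α / (α t - β)` solves the Riccati equation `u' = -u²`. Hence for
`h = (u + v) / 2` one gets `h' = -(u² + v²) / 2` and `h'' = u³ + v³`, and the equation
`h'' + 6 h h' + 4 h³ = 0` becomes the polynomial identity
`u³ + v³ - (3/2) (u + v) (u² + v²) + (1/2) (u + v)³ = 0`.
-/

open Filter Topology

theorem hasDerivAt_div_linear {α β t : ℝ} (ht : α * t - β ≠ 0) :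
    HasDerivAt (fun s => α / (α * s - β)) (-(α / (α * t - β)) ^ 2) t := by
  have hlin : HasDerivAt (fun s => α * s - β) α t := by
    simpa using ((hasDerivAt_id t).const_mul α).sub_const β
  refine ((hasDerivAt_const t α).div hlin ht).congr_deriv ?_
  field_simp
  ring

theorem eventually_hasDerivAt_div_linear {α β t : ℝ} (ht : α * t - β ≠ 0) :
    ∀ᶠ s in 𝓝 t, HasDerivAt (fun s => α / (α * s - β)) (-(α / (α * s - β)) ^ 2) s := by
  have hcont : ContinuousAt (fun s => α * s - β) t := by fun_prop
  filter_upwards [hcont.eventually_ne ht] with s hs using hasDerivAt_div_linear hs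

theorem half_sum_riccati_ode {u v : ℝ → ℝ} {t : ℝ}
    (hu : ∀ᶠ s in 𝓝 t, HasDerivAt u (-(u s) ^ 2) s)
    (hv : ∀ᶠ s in 𝓝 t, HasDerivAt v (-(v s) ^ 2) s) :
    deriv (deriv (fun s => (1/2) * (u s + v s))) t
      + 6 * ((1/2) * (u t + v t)) * deriv (fun s => (1/2) * (u s + v s)) t
      + 4 * ((1/2) * (u t + v t)) ^ 3 = 0 := by
  have hh : ∀ᶠ s in 𝓝 t,
      HasDerivAt (fun s => (1/2) * (u s + v s)) (-(1/2) * (u s ^ 2 + v s ^ 2)) s := by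
    filter_upwards [hu, hv] with s hus hvs
    exact (hus.add hvs).const_mul (1/2) |>.congr_deriv (by ring)
  have hderiv : deriv (fun s => (1/2) * (u s + v s)) t = -(1/2) * (u t ^ 2 + v t ^ 2) :=
    hh.self_of_nhds.deriv
  have hderiv2 : deriv (deriv (fun s => (1/2) * (u s + v s))) t = u t ^ 3 + v t ^ 3 := by
    have heq : deriv (fun s => (1/2) * (u s + v s)) =ᶠ[𝓝 t]
        fun s => -(1/2) * (u s ^ 2 + v s ^ 2) :=
      hh.mono fun s hs => hs.deriv
    rw [heq.deriv_eq]
    exact (((hu.self_of_nhds.pow 2).add (hv.self_of_nhds.pow 2)).const_mul (-(1/2))).deriv.trans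
      (by ring)
  rw [hderiv, hderiv2]
  ring

/-- h(t) = (1/2)(α₁/(α₁t−β₁) + α₂/(α₂t−β₂)) satisfies h'' + 6hh' + 4h³ = 0
at every point where both denominators are nonzero. -/
theorem one_ansatz_ode (α₁ β₁ α₂ β₂ : ℝ) :
    ∀ t : ℝ, α₁ * t - β₁ ≠ 0 → α₂ * t - β₂ ≠ 0 →
      deriv (deriv (fun s => (1/2) * (α₁ / (α₁ * s - β₁) + α₂ / (α₂ * s - β₂)))) t
        + 6 * ((1/2) * (α₁ / (α₁ * t - β₁) + α₂ / (α₂ * t - β₂)))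
            * deriv (fun s => (1/2) * (α₁ / (α₁ * s - β₁) + α₂ / (α₂ * s - β₂))) t
        + 4 * ((1/2) * (α₁ / (α₁ * t - β₁) + α₂ / (α₂ * t - β₂)))^3 = 0 :=
  fun _ h₁ h₂ =>
    half_sum_riccati_ode (eventually_hasDerivAt_div_linear h₁) (eventually_hasDerivAt_div_linear h₂)
end
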